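/- Let G be the two-interval exchange with parameter α > 1/2 irrational (G(y) = y+1−α on [0,α), G(y) = y−α on [α,1)), and let k = ⌊α/(1−α)⌋, so k(1−α) < α < (k+1)(1−α). Define T on [0,1) by T(y) = G(y) for y ∈ I_A = [0, α), T(y) = G^{k+3}(y) for y ∈ I_B = [α, 2α − k(1−α)), and T(y) = G^{k+2}(y) for y ∈ I_C = [2α − k(1−α), 1). Then T is an exchange of the three intervals I_A, I_B, I_C under the permutation (3,2,1): T(I_A) = [1−α, 1), T(I_B) = [(k+1)(1−α)−α, 1−α), T(I_C) = [0, (k+1)(1−α)−α). Moreover I_A ⊂ [0,α); I_B ⊂ [α,1) with G^j(I_B) ⊂ [0,α) for j = 1,...,k+1 and G^{k+2}(I_B) ⊂ [α,1); and I_C ⊂ [α,1) with G^j(I_C) ⊂ [0,α) for j = 1,...,k and G^{k+1}(I_C) ⊂ [α,1). -/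
import Mathlib


/-- let `G` be the two-interval exchange with irrational slope
`α > 1/2`, and `k = ⌊α/(1−α)⌋`, i.e. `k(1−α) < α < (k+1)(1−α)`. Define `T` by
`T = G` on `I_A = [0, α)`, `T = G^{k+3}` on `I_B = [α, 2α − k(1−α))` and
`T = G^{k+2}` on `I_C = [2α − k(1−α), 1)`. Then `T` exchanges the three intervals
under the permutation `(3,2,1)`, and the listed itinerary inclusions hold. -/
theorem T_three_iet (α : ℝ) (k : ℕ) (hirr : Irrational α) (hα1 : α < 1)
    (hk1 : 1 ≤ k)
    (hklo : (k : ℝ) * (1 - α) < α) (hkhi : α < ((k : ℝ) + 1) * (1 - α))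
    (G T : ℝ → ℝ)
    (hG : ∀ y, G y = if y < α then y + 1 - α else y - α)
    (hT : ∀ y, T y = if y < α then G y
        else if y < 2 * α - k * (1 - α) then G^[k + 3] y else G^[k + 2] y) :
    T '' Set.Ico 0 α = Set.Ico (1 - α) 1 ∧
    T '' Set.Ico α (2 * α - k * (1 - α)) =
      Set.Ico (((k : ℝ) + 1) * (1 - α) - α) (1 - α) ∧
    T '' Set.Ico (2 * α - k * (1 - α)) 1 =
      Set.Ico 0 (((k : ℝ) + 1) * (1 - α) - α) ∧
    Set.Ico (0 : ℝ) α ⊆ Set.Ico 0 α ∧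
    Set.Ico α (2 * α - k * (1 - α)) ⊆ Set.Ico α 1 ∧
    (∀ j, 1 ≤ j → j ≤ k + 1 →
      G^[j] '' Set.Ico α (2 * α - k * (1 - α)) ⊆ Set.Ico 0 α) ∧
    G^[k + 2] '' Set.Ico α (2 * α - k * (1 - α)) ⊆ Set.Ico α 1 ∧
    Set.Ico (2 * α - k * (1 - α)) 1 ⊆ Set.Ico α 1 ∧
    (∀ j, 1 ≤ j → j ≤ k →
      G^[j] '' Set.Ico (2 * α - k * (1 - α)) 1 ⊆ Set.Ico 0 α) ∧
    G^[k + 1] '' Set.Ico (2 * α - k * (1 - α)) 1 ⊆ Set.Ico α 1 := by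
  have hβpos : (0:ℝ) < 1 - α := by linarith
  have hk1' : (1:ℝ) ≤ k := by exact_mod_cast hk1
  have hαhalf : 1 - α < α := by nlinarith
  have hGlt : ∀ y : ℝ, y < α → G y = y + 1 - α := by
    intro y h; rw [hG]; simp [h]
  have hGge : ∀ y : ℝ, ¬ y < α → G y = y - α := by
    intro y h; rw [hG]; simp [h]
  -- general iteration lemma while staying in [0, α)
  have iter_eq : ∀ (n : ℕ) (y : ℝ), (∀ i : ℕ, i < n → y + i * (1 - α) < α) →
      G^[n] y = y + n * (1 - α) := by
    intro n
    induction n with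
    | zero => intro y _; simp
    | succ m ih =>
      intro y h
      rw [Function.iterate_succ_apply', ih y (fun i hi => h i (by omega)),
        hGlt _ (h m (by omega))]
      push_cast; ring
  -- iterates on I_B
  have hB : ∀ y ∈ Set.Ico α (2 * α - k * (1 - α)), ∀ n : ℕ, n ≤ k + 1 →
      G^[n + 1] y = y - α + n * (1 - α) := by
    intro y hy n hn
    rw [Function.iterate_succ_apply, hGge y (not_lt.mpr hy.1)]
    have := iter_eq n (y - α) ?_
    · rw [this]
    · intro i hi
      have hik : (i:ℝ) ≤ k := by exact_mod_cast Nat.lt_succ_iff.mp (lt_of_lt_of_le hi hn)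
      have : (i:ℝ) * (1 - α) ≤ k * (1 - α) := by
        apply mul_le_mul_of_nonneg_right hik hβpos.le
      have h2 := hy.2
      linarith
  -- iterates on I_C
  have hC : ∀ y ∈ Set.Ico (2 * α - k * (1 - α)) 1, ∀ n : ℕ, n ≤ k →
      G^[n + 1] y = y - α + n * (1 - α) := by
    intro y hy n hn
    have hyα : α ≤ y := by
      have := hy.1; linarith
    rw [Function.iterate_succ_apply, hGge y (not_lt.mpr hyα)]
    have := iter_eq n (y - α) ?_
    · rw [this]
    · intro i hi
      have hik : (i:ℝ) ≤ (k:ℝ) - 1 := by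
        have : (i:ℝ) + 1 ≤ k := by exact_mod_cast lt_of_lt_of_le hi hn
        linarith
      have : (i:ℝ) * (1 - α) ≤ ((k:ℝ) - 1) * (1 - α) := by
        apply mul_le_mul_of_nonneg_right hik hβpos.le
      have h2 := hy.2
      nlinarith
  -- key pointwise values
  have hTA : ∀ y ∈ Set.Ico (0:ℝ) α, T y = y + (1 - α) := by
    intro y hy
    rw [hT, if_pos hy.2, hGlt y hy.2]; ring
  have hBk2 : ∀ y ∈ Set.Ico α (2 * α - k * (1 - α)),
      G^[k + 2] y = y - α + ((k:ℝ) + 1) * (1 - α) := by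
    intro y hy
    have := hB y hy (k + 1) le_rfl
    rw [show (k+1)+1 = k+2 from rfl] at this
    rw [this]; push_cast; ring
  have hTB : ∀ y ∈ Set.Ico α (2 * α - k * (1 - α)),
      T y = y + (((k:ℝ) + 1) * (1 - α) - 2 * α) := by
    intro y hy
    rw [hT, if_neg (not_lt.mpr hy.1), if_pos hy.2,
      show k + 3 = (k + 2) + 1 from rfl, Function.iterate_succ_apply', hBk2 y hy,
      hGge _ (by push_cast; nlinarith [hy.1])]
    ring
  have hCk1 : ∀ y ∈ Set.Ico (2 * α - k * (1 - α)) 1,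
      G^[k + 1] y = y - α + (k:ℝ) * (1 - α) := by
    intro y hy
    exact hC y hy k le_rfl
  have hTC : ∀ y ∈ Set.Ico (2 * α - k * (1 - α)) 1,
      T y = y + ((k:ℝ) * (1 - α) - 2 * α) := by
    intro y hy
    have hyα : ¬ y < α := not_lt.mpr (by have := hy.1; linarith)
    have hy2 : ¬ y < 2 * α - k * (1 - α) := not_lt.mpr hy.1
    rw [hT, if_neg hyα, if_neg hy2,
      show k + 2 = (k + 1) + 1 from rfl, Function.iterate_succ_apply', hCk1 y hy,
      hGge _ (by nlinarith [hy.1])]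
    ring
  refine ⟨?_, ?_, ?_, ?_, ?_, ?_, ?_, ?_, ?_, ?_⟩
  · rw [Set.image_congr hTA, Set.image_add_const_Ico]
    congr 1 <;> ring
  · rw [Set.image_congr hTB, Set.image_add_const_Ico]
    congr 1 <;> ring
  · rw [Set.image_congr hTC, Set.image_add_const_Ico]
    congr 1 <;> ring
  · exact subset_rfl
  · intro y hy
    exact ⟨hy.1, by have := hy.2; nlinarith⟩
  · intro j hj1 hjk
    rintro _ ⟨y, hy, rfl⟩
    obtain ⟨n, rfl⟩ := Nat.exists_eq_add_of_le hj1
    rw [Nat.add_comm 1 n, hB y hy n (by omega)]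
    have hnk : (n:ℝ) ≤ k := by exact_mod_cast (by omega : n ≤ k)
    have h1 : (0:ℝ) ≤ (n:ℝ) * (1 - α) := by positivity
    have h2 : (n:ℝ) * (1 - α) ≤ k * (1 - α) := mul_le_mul_of_nonneg_right hnk hβpos.le
    exact ⟨by linarith [hy.1], by linarith [hy.2]⟩
  · rintro _ ⟨y, hy, rfl⟩
    rw [hBk2 y hy]
    exact ⟨by linarith [hy.1], by nlinarith [hy.2]⟩
  · intro y hy
    exact ⟨by linarith [hy.1], hy.2⟩
  · intro j hj1 hjk
    rintro _ ⟨y, hy, rfl⟩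
    obtain ⟨n, rfl⟩ := Nat.exists_eq_add_of_le hj1
    rw [Nat.add_comm 1 n, hC y hy n (by omega)]
    have hnk : (n:ℝ) ≤ (k:ℝ) - 1 := by
      have : (n:ℝ) + 1 ≤ k := by exact_mod_cast (by omega : n + 1 ≤ k)
      linarith
    have h1 : (0:ℝ) ≤ (n:ℝ) * (1 - α) := by positivity
    have h2 : (n:ℝ) * (1 - α) ≤ ((k:ℝ) - 1) * (1 - α) :=
      mul_le_mul_of_nonneg_right hnk hβpos.le
    refine ⟨by linarith [hy.1], ?_⟩
    have := hy.2
    nlinarith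
  · rintro _ ⟨y, hy, rfl⟩
    rw [hCk1 y hy]
    exact ⟨by linarith [hy.1], by linarith [hy.2]⟩
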